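/- For every n ≥ 1, the ℂ[x,y₀]-derivation D with D(z₁) = x, D(z₂) = 2y₀z₁ + 1, D(y_i) = i·y₀·y_{i-1} (1 ≤ i ≤ n) preserves the ideal of the threefold X_n ⊂ 𝔸^{n+4} defined by the equations y_i y_j = y_k y_ℓ (i+j = k+ℓ), z₂ y_i = z₁ y_{i+1}, x y_{i+1} = y_i(y₀ z₁ + 1), x z₂ = z₁(y₀ z₁ + 1), and the induced derivation on the coordinate ring of X_n is locally nilpotent and has no zeros on X_n. -/

import Mathlib

/-! The elements killed by some iterate of a derivation form a subalgebra (Leibniz rule). `D` kills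
`x` and `y₀`, sends `z₁` to `x`, `z₂` to a polynomial in `y₀, z₁`, and lowers the index of `y_i`,
so every coordinate is killed by an iterate of `D` and `D` is locally nilpotent.

Applied to a defining equation of `X_n`, `D` returns `y₀` times an integer combination of defining
equations of one lower weight (or `0`), so by Leibniz `D` preserves the ideal they generate.

At a zero of `D` on `X_n` we would have `x = 0` and `2 y₀ z₁ = -1`; then `x z₂ = z₁ (y₀ z₁ + 1)`
reads `z₁ / 2 = 0`, contradicting `2 y₀ z₁ = -1`. -/

open MvPolynomial

/-- A derivation `D` is locally nilpotent if every element is annihilated by some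
iterate of `D`. -/
def Derivation.IsLocallyNilpotent {R A : Type*} [CommRing R] [CommRing A] [Algebra R A]
    (D : Derivation R A A) : Prop :=
  ∀ a : A, ∃ n : ℕ, (⇑D)^[n] a = 0

/-- Coordinates: `x = X 0`, `y₀ = X 1`, `z₁ = X 2`, `z₂ = X 3`, `y_i = X (3+i)` for
`i ≥ 1`; only the variables `X 0, …, X (3+n)` are used for `X_n ⊂ 𝔸^{n+4}`. -/
noncomputable abbrev RY : Type := MvPolynomial ℕ ℂ

/-- `y i`, for `0 ≤ i`. -/
noncomputable def yv (i : ℕ) : RY := if i = 0 then X 1 else X (3 + i)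

/-- The `ℂ[x,y₀]`-derivation with `D z₁ = x`, `D z₂ = 2y₀z₁ + 1`,
`D y_i = i·y₀·y_{i-1}` for `1 ≤ i ≤ n`. -/
noncomputable def Dn (n : ℕ) : Derivation ℂ RY RY :=
  MvPolynomial.mkDerivation ℂ
    (fun j => if j = 2 then X 0
              else if j = 3 then 2 * X 1 * X 2 + 1
              else if 4 ≤ j ∧ j ≤ 3 + n then ((j - 3 : ℕ) : RY) * X 1 * yv (j - 4)
              else 0)

/-- The defining equations of `X_n ⊂ 𝔸^{n+4}`. -/
def Gset (n : ℕ) : Set RY :=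
  {f | (∃ i j k l : ℕ, i + j = k + l ∧ i ≤ n ∧ j ≤ n ∧ k ≤ n ∧ l ≤ n ∧
          f = yv i * yv j - yv k * yv l) ∨
       (∃ i : ℕ, i < n ∧ f = X 3 * yv i - X 2 * yv (i + 1)) ∨
       (∃ i : ℕ, i < n ∧ f = X 0 * yv (i + 1) - yv i * (X 1 * X 2 + 1)) ∨
       f = X 0 * X 3 - X 2 * (X 1 * X 2 + 1)}

namespace Derivation

variable {R A : Type*} [CommRing R] [CommRing A] [Algebra R A] (D : Derivation R A A)

theorem iterate_apply_eq_zero_of_le {a : A} {m k : ℕ} (h : D^[m] a = 0) (hmk : m ≤ k) :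
    D^[k] a = 0 := by
  obtain ⟨l, rfl⟩ := Nat.exists_eq_add_of_le hmk
  rw [add_comm, Function.iterate_add_apply, h, iterate_map_zero]

theorem iterate_add_apply_mul_eq_zero {a b : A} {p q : ℕ} (ha : D^[p] a = 0)
    (hb : D^[q] b = 0) : D^[p + q] (a * b) = 0 := by
  induction h : p + q generalizing a b p q with
  | zero =>
    obtain ⟨rfl, rfl⟩ : p = 0 ∧ q = 0 := by omega
    simp_all
  | succ s ih =>
    rcases p with _ | p
    · simp_all
    rcases q with _ | q
    · simp_all
    rw [Function.iterate_succ_apply, leibniz, smul_eq_mul, smul_eq_mul, iterate_map_add,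
      ih ha (q := q) (by rwa [← Function.iterate_succ_apply]) (by omega),
      ih hb (q := p) (by rwa [← Function.iterate_succ_apply]) (by omega), add_zero]

def locallyNilpotentSubalgebra : Subalgebra R A where
  carrier := {a | ∃ n, D^[n] a = 0}
  mul_mem' := fun ⟨p, hp⟩ ⟨q, hq⟩ => ⟨p + q, D.iterate_add_apply_mul_eq_zero hp hq⟩
  add_mem' := fun ⟨p, hp⟩ ⟨q, hq⟩ => ⟨max p q, by
    rw [iterate_map_add, D.iterate_apply_eq_zero_of_le hp (le_max_left p q),
      D.iterate_apply_eq_zero_of_le hq (le_max_right p q), add_zero]⟩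
  algebraMap_mem' r := ⟨1, D.map_algebraMap r⟩

variable {D}

theorem mem_locallyNilpotentSubalgebra_of_apply_mem {a : A}
    (h : D a ∈ D.locallyNilpotentSubalgebra) : a ∈ D.locallyNilpotentSubalgebra :=
  let ⟨n, hn⟩ := h; ⟨n + 1, hn⟩

theorem mem_locallyNilpotentSubalgebra_of_apply_eq_zero {a : A} (h : D a = 0) :
    a ∈ D.locallyNilpotentSubalgebra :=
  ⟨1, h⟩

theorem isLocallyNilpotent_of_adjoin_eq_top {s : Set A} (hs : Algebra.adjoin R s = ⊤)
    (h : s ⊆ D.locallyNilpotentSubalgebra) : IsLocallyNilpotent D := fun a =>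
  (Algebra.adjoin_le h) (hs ▸ Algebra.mem_top : a ∈ Algebra.adjoin R s)

theorem mapsTo_span {s : Set A} (h : ∀ g ∈ s, D g ∈ Ideal.span s) :
    Set.MapsTo D (Ideal.span s) (Ideal.span s) := by
  intro g hg
  induction hg using Submodule.span_induction with
  | mem g hg => exact h g hg
  | zero => simp
  | add x y _ _ hx hy => rw [map_add]; exact add_mem hx hy
  | smul r x _ hx =>
    rw [smul_eq_mul, leibniz, smul_eq_mul, smul_eq_mul]
    exact add_mem (Ideal.mul_mem_left _ _ hx) (Ideal.mul_mem_right _ _ ‹_›)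

end Derivation

section Dn

variable {n : ℕ}

@[simp]
theorem Dn_X_zero : Dn n (X 0) = 0 := by simp [Dn, mkDerivation_X]

@[simp]
theorem Dn_X_one : Dn n (X 1) = 0 := by simp [Dn, mkDerivation_X]

@[simp]
theorem Dn_X_two : Dn n (X 2) = X 0 := by simp [Dn, mkDerivation_X]

@[simp]
theorem Dn_X_three : Dn n (X 3) = 2 * X 1 * X 2 + 1 := by simp [Dn, mkDerivation_X]

theorem Dn_X_of_lt {j : ℕ} (hj : 3 + n < j) : Dn n (X j) = 0 := by
  simp [Dn, mkDerivation_X, show j ≠ 2 by omega, show j ≠ 3 by omega, show ¬j ≤ 3 + n by omega]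

-- `i - 1` is truncated, which is harmless since the coefficient `i` vanishes at `i = 0`.
theorem Dn_yv {i : ℕ} (hi : i ≤ n) : Dn n (yv i) = (i : RY) * X 1 * yv (i - 1) := by
  rcases i with _ | i
  · simp [yv]
  · rw [yv, if_neg i.succ_ne_zero, show 3 + (i + 1) = i + 4 by omega, Dn, mkDerivation_X,
      if_neg (by omega), if_neg (by omega), if_pos (by omega)]
    rfl

theorem yv_mem_locallyNilpotentSubalgebra {i : ℕ} (hi : i ≤ n) :
    yv i ∈ (Dn n).locallyNilpotentSubalgebra := by
  induction i with
  | zero => exact Derivation.mem_locallyNilpotentSubalgebra_of_apply_eq_zero (by simp [yv])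
  | succ i ih =>
    refine Derivation.mem_locallyNilpotentSubalgebra_of_apply_mem ?_
    rw [Dn_yv hi, Nat.add_sub_cancel]
    exact mul_mem (mul_mem (natCast_mem _ _)
      (Derivation.mem_locallyNilpotentSubalgebra_of_apply_eq_zero Dn_X_one)) (ih (by omega))

theorem X_mem_locallyNilpotentSubalgebra (j : ℕ) : X j ∈ (Dn n).locallyNilpotentSubalgebra := by
  open Derivation in
  match j with
  | 0 => exact mem_locallyNilpotentSubalgebra_of_apply_eq_zero Dn_X_zero
  | 1 => exact mem_locallyNilpotentSubalgebra_of_apply_eq_zero Dn_X_one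
  | 2 =>
    refine mem_locallyNilpotentSubalgebra_of_apply_mem ?_
    rw [Dn_X_two]
    exact X_mem_locallyNilpotentSubalgebra 0
  | 3 =>
    refine mem_locallyNilpotentSubalgebra_of_apply_mem ?_
    rw [Dn_X_three]
    have := X_mem_locallyNilpotentSubalgebra 1
    have := X_mem_locallyNilpotentSubalgebra 2
    exact add_mem (mul_mem (mul_mem (ofNat_mem _ 2) ‹_›) ‹_›) (one_mem _)
  | j + 4 =>
    rcases le_or_gt (j + 4) (3 + n) with hj | hj
    · simpa [yv, show 3 + (j + 1) = j + 4 by omega] using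
        yv_mem_locallyNilpotentSubalgebra (n := n) (i := j + 1) (by omega)
    · exact mem_locallyNilpotentSubalgebra_of_apply_eq_zero (Dn_X_of_lt hj)

theorem Dn_isLocallyNilpotent : (Dn n).IsLocallyNilpotent :=
  Derivation.isLocallyNilpotent_of_adjoin_eq_top (adjoin_range_X)
    (Set.range_subset_iff.2 X_mem_locallyNilpotentSubalgebra)

end Dn

section Ideal

variable {n : ℕ}

theorem natCast_mul_mem_span_Gset {a b p q m : ℕ}
    (h : m ≠ 0 → a + b = p + q ∧ a ≤ n ∧ b ≤ n ∧ p ≤ n ∧ q ≤ n) :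
    (m : RY) * (yv a * yv b - yv p * yv q) ∈ Ideal.span (Gset n) := by
  rcases eq_or_ne m 0 with rfl | hm
  · simp
  · obtain ⟨hs, ha, hb, hp, hq⟩ := h hm
    exact Ideal.mul_mem_left _ _ (Ideal.subset_span (Or.inl ⟨a, b, p, q, hs, ha, hb, hp, hq, rfl⟩))

theorem Dn_yv_mul_yv_sub_mem {i j k l : ℕ} (hs : i + j = k + l) (hi : i ≤ n) (hj : j ≤ n)
    (hk : k ≤ n) (hl : l ≤ n) :
    Dn n (yv i * yv j - yv k * yv l) ∈ Ideal.span (Gset n) := by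
  -- The four products in `D (y_i y_j - y_k y_l)` have weight `i + j - 1` and coefficients
  -- summing to `0`, so each may be compared with one fixed `y_p y_q` of that weight.
  set p := min n (i + j - 1)
  set q := i + j - 1 - p
  have hc : (i : RY) + j = k + l := by exact_mod_cast hs
  have hD : Dn n (yv i * yv j - yv k * yv l)
      = X 1 * ((i : RY) * (yv (i - 1) * yv j - yv p * yv q)
          + (j : RY) * (yv i * yv (j - 1) - yv p * yv q)
          - (k : RY) * (yv (k - 1) * yv l - yv p * yv q)
          - (l : RY) * (yv k * yv (l - 1) - yv p * yv q)) := by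
    simp only [map_sub, Derivation.leibniz, Dn_yv hi, Dn_yv hj, Dn_yv hk, Dn_yv hl, smul_eq_mul]
    linear_combination (X 1 * (yv p * yv q)) * hc
  rw [hD]
  refine Ideal.mul_mem_left _ _ (sub_mem (sub_mem (add_mem ?_ ?_) ?_) ?_) <;>
    exact natCast_mul_mem_span_Gset fun h => by omega

theorem Dn_X_three_mul_yv_sub_mem {i : ℕ} (hi : i < n) :
    Dn n (X 3 * yv i - X 2 * yv (i + 1)) ∈ Ideal.span (Gset n) := by
  have hD : Dn n (X 3 * yv i - X 2 * yv (i + 1))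
      = (i : RY) * X 1 * (X 3 * yv (i - 1) - X 2 * yv i)
        - (X 0 * yv (i + 1) - yv i * (X 1 * X 2 + 1)) := by
    simp only [map_sub, Derivation.leibniz, Dn_yv hi.le, Dn_yv hi, Dn_X_two, Dn_X_three,
      smul_eq_mul]
    push_cast
    ring
  rw [hD]
  refine sub_mem ?_ (Ideal.subset_span (Or.inr (Or.inr (Or.inl ⟨i, hi, rfl⟩))))
  rcases i with _ | i
  · simp
  · exact Ideal.mul_mem_left _ _ (Ideal.subset_span (Or.inr (Or.inl ⟨i, by omega, rfl⟩)))

theorem Dn_X_zero_mul_yv_sub_mem {i : ℕ} (hi : i < n) :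
    Dn n (X 0 * yv (i + 1) - yv i * (X 1 * X 2 + 1)) ∈ Ideal.span (Gset n) := by
  have hD : Dn n (X 0 * yv (i + 1) - yv i * (X 1 * X 2 + 1))
      = (i : RY) * X 1 * (X 0 * yv i - yv (i - 1) * (X 1 * X 2 + 1)) := by
    simp only [map_sub, map_add, Derivation.leibniz, Derivation.map_one_eq_zero, Dn_yv hi.le,
      Dn_yv hi, Dn_X_zero, Dn_X_one, Dn_X_two, smul_eq_mul]
    push_cast
    ring
  rw [hD]
  rcases i with _ | i
  · simp
  · exact Ideal.mul_mem_left _ _ (Ideal.subset_span (Or.inr (Or.inr (Or.inl ⟨i, by omega, rfl⟩))))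

theorem Dn_X_zero_mul_X_three_sub : Dn n (X 0 * X 3 - X 2 * (X 1 * X 2 + 1)) = 0 := by
  simp only [map_sub, map_add, Derivation.leibniz, Derivation.map_one_eq_zero, Dn_X_zero,
    Dn_X_one, Dn_X_two, Dn_X_three, smul_eq_mul]
  ring

theorem Dn_mem_span_Gset : ∀ g ∈ Gset n, Dn n g ∈ Ideal.span (Gset n) := by
  rintro g (⟨i, j, k, l, hs, hi, hj, hk, hl, rfl⟩ | ⟨i, hi, rfl⟩ | ⟨i, hi, rfl⟩ | rfl)
  · exact Dn_yv_mul_yv_sub_mem hs hi hj hk hl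
  · exact Dn_X_three_mul_yv_sub_mem hi
  · exact Dn_X_zero_mul_yv_sub_mem hi
  · exact Dn_X_zero_mul_X_three_sub ▸ zero_mem _

end Ideal

theorem not_forall_eval_Dn_X_eq_zero {n : ℕ} {P : ℕ → ℂ}
    (hP : eval P (X 0 * X 3 - X 2 * (X 1 * X 2 + 1)) = 0) :
    ¬ ∀ j : ℕ, eval P (Dn n (X j)) = 0 := by
  intro h
  have hx : P 0 = 0 := by simpa using h 2
  have hz : 2 * P 1 * P 2 + 1 = 0 := by simpa using h 3
  simp only [map_sub, map_mul, map_add, map_one, eval_X] at hP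
  have : (1 : ℂ) = 0 := by
    linear_combination (1 + 2 * P 1 * P 2) * hz + 4 * P 1 * hP - 4 * P 1 * P 3 * hx
  exact one_ne_zero this

theorem stmt_17_general (n : ℕ) :
    (∀ g ∈ Ideal.span (Gset n), Dn n g ∈ Ideal.span (Gset n)) ∧
    (Dn n).IsLocallyNilpotent ∧
    ∀ P : ℕ → ℂ, (∀ g ∈ Gset n, eval P g = 0) →
      ¬ ∀ j : ℕ, eval P (Dn n (X j)) = 0 :=
  ⟨fun _ => (Derivation.mapsTo_span Dn_mem_span_Gset ·), Dn_isLocallyNilpotent,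
    fun _ hP => not_forall_eval_Dn_X_eq_zero (hP _ (Or.inr (Or.inr (Or.inr rfl))))⟩

/-- For every `n ≥ 1`, the derivation `D` with `D z₁ = x`, `D z₂ = 2y₀z₁+1`,
`D y_i = i·y₀·y_{i-1}` preserves the ideal of the threefold `X_n` defined by the
equations `y_i y_j = y_k y_ℓ` (`i+j = k+ℓ`), `z₂ y_i = z₁ y_{i+1}`,
`x y_{i+1} = y_i(y₀z₁+1)`, `x z₂ = z₁(y₀z₁+1)`; the induced derivation is locally
nilpotent and has no zeros on `X_n`: at no point of `X_n` do all the images `D(X j)`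
vanish. -/
theorem stmt_17 (n : ℕ) (hn : 1 ≤ n) :
    (∀ g ∈ Ideal.span (Gset n), Dn n g ∈ Ideal.span (Gset n)) ∧
    (Dn n).IsLocallyNilpotent ∧
    ∀ P : ℕ → ℂ, (∀ g ∈ Gset n, eval P g = 0) →
      ¬ ∀ j : ℕ, eval P (Dn n (X j)) = 0 :=
  stmt_17_general n
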